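/- Let σ ≥ 0 and suppose M(s) - μ* = (1,s)ᵀX(1,s) + p(‖s‖)² + ‖s‖q(‖s‖)² for all s ∈ ℝⁿ, where X ⪰ 0, p has degree exactly 2 with leading coefficient √σ/2, q has degree ≤ 1, and μ* = M(s*) for a global minimizer s* ≠ 0. Then ‖s*‖(β + 3σ‖s*‖) ≥ 0. -/

import Mathlib

open Matrix Polynomial

noncomputable def enorm2 {n : ℕ} (s : Fin n → ℝ) : ℝ := Real.sqrt (s ⬝ᵥ s)

noncomputable def Mfun {n : ℕ} (f0 : ℝ) (g : Fin n → ℝ)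
    (H : Matrix (Fin n) (Fin n) ℝ) (β σ : ℝ) (s : Fin n → ℝ) : ℝ :=
  f0 + g ⬝ᵥ s + (1/2) * (s ⬝ᵥ (H *ᵥ s)) + (β/6) * enorm2 s ^ 3 + (σ/4) * enorm2 s ^ 4

noncomputable def Bmat {n : ℕ} (H : Matrix (Fin n) (Fin n) ℝ) (β σ : ℝ)
    (s : Fin n → ℝ) : Matrix (Fin n) (Fin n) ℝ :=
  H + ((β/2) * enorm2 s) • (1 : Matrix (Fin n) (Fin n) ℝ)
    + (σ * enorm2 s ^ 2) • (1 : Matrix (Fin n) (Fin n) ℝ)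

/-!
Restrict the representation to the line through the minimizer, `s = t • u` with `u = s* / ‖s*‖`.
There `M` has the form `quadratic(t) + (β/6)|t|³ + (σ/4)t⁴`, while the right-hand side is
`quadratic(t) + p(|t|)² + |t| q(|t|)²`. Adding the identities at `t` and `-t` kills the odd
quadratic terms and leaves a polynomial identity in `t > 0`, whose `t` and `t³` coefficients give,
with `pᵢ, qᵢ` the coefficients of `p, q`, `2 p₁ p₀ + q₀² = 0` and `β/6 = 2 p₂ p₁ + q₁²`. Evaluating the representation at `s*` forces
`p(‖s*‖) = q(‖s*‖) = 0`, and eliminating `p₀, q₀` yields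
`‖s*‖ (β + 3σ‖s*‖) = 12 (p₂‖s*‖ + p₁)² ≥ 0`.
-/

namespace Polynomial

variable {R : Type*} [CommSemiring R]

lemma eval_eq_of_natDegree_le_one {p : R[X]} (hp : p.natDegree ≤ 1) (x : R) :
    p.eval x = p.coeff 0 + p.coeff 1 * x := by
  rw [eval_eq_sum_range' (Nat.lt_succ_of_le hp)]
  simp [Finset.sum_range_succ]

lemma eval_eq_of_natDegree_le_two {p : R[X]} (hp : p.natDegree ≤ 2) (x : R) :
    p.eval x = p.coeff 0 + p.coeff 1 * x + p.coeff 2 * x ^ 2 := by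
  rw [eval_eq_sum_range' (Nat.lt_succ_of_le hp)]
  simp [Finset.sum_range_succ]

end Polynomial

lemma enorm2_smul {n : ℕ} (c : ℝ) (s : Fin n → ℝ) : enorm2 (c • s) = |c| * enorm2 s := by
  have h : (c • s) ⬝ᵥ (c • s) = c ^ 2 * (s ⬝ᵥ s) := by
    rw [smul_dotProduct, dotProduct_smul, smul_eq_mul, smul_eq_mul]; ring
  rw [enorm2, enorm2, h, Real.sqrt_mul (sq_nonneg c), Real.sqrt_sq_eq_abs]

lemma enorm2_pos {n : ℕ} {s : Fin n → ℝ} (hs : s ≠ 0) : 0 < enorm2 s :=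
  Real.sqrt_pos.mpr <| (dotProduct_self_star_nonneg s).lt_of_ne' (mt dotProduct_self_eq_zero.mp hs)

lemma Mfun_smul_of_enorm2_eq_one {n : ℕ} (f0 : ℝ) (g : Fin n → ℝ)
    (H : Matrix (Fin n) (Fin n) ℝ) (β σ : ℝ) {u : Fin n → ℝ} (hu : enorm2 u = 1) (t : ℝ) :
    Mfun f0 g H β σ (t • u) = f0 + (g ⬝ᵥ u) * t + (1 / 2 * (u ⬝ᵥ (H *ᵥ u))) * t ^ 2
      + β / 6 * |t| ^ 3 + σ / 4 * t ^ 4 := by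
  rw [Mfun, enorm2_smul, hu, mul_one, dotProduct_smul, mulVec_smul, smul_dotProduct,
    dotProduct_smul, smul_eq_mul, smul_eq_mul, smul_eq_mul]
  linear_combination σ / 4 * (|t| ^ 2 + t ^ 2) * sq_abs t

lemma dotProduct_mulVec_add_smul {ι R : Type*} [Fintype ι] [CommRing R]
    (X : Matrix ι ι R) (v w : ι → R) (t : R) :
    (v + t • w) ⬝ᵥ (X *ᵥ (v + t • w)) = v ⬝ᵥ (X *ᵥ v)
      + (v ⬝ᵥ (X *ᵥ w) + w ⬝ᵥ (X *ᵥ v)) * t + w ⬝ᵥ (X *ᵥ w) * t ^ 2 := by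
  simp only [mulVec_add, mulVec_smul, add_dotProduct, dotProduct_add, smul_dotProduct,
    dotProduct_smul, smul_eq_mul]
  ring

lemma exists_quadratic_cons_one_smul {n : ℕ} (X : Matrix (Fin (n + 1)) (Fin (n + 1)) ℝ)
    (u : Fin n → ℝ) : ∃ a b c : ℝ, ∀ t : ℝ,
      (Fin.cons 1 (t • u) : Fin (n + 1) → ℝ) ⬝ᵥ (X *ᵥ Fin.cons 1 (t • u)) = a + b * t + c * t ^ 2 := by
  have hcons (t : ℝ) : (Fin.cons 1 (t • u) : Fin (n + 1) → ℝ) = Fin.cons 1 0 + t • Fin.cons 0 u := by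
    ext i; refine Fin.cases ?_ (fun j => ?_) i <;> simp
  exact ⟨_, _, _, fun t => by rw [hcons, dotProduct_mulVec_add_smul]⟩

lemma cubic_coeffs_eq_zero {a b c d : ℝ}
    (h : ∀ t : ℝ, 0 < t → a + b * t + c * t ^ 2 + d * t ^ 3 = 0) :
    a = 0 ∧ b = 0 ∧ c = 0 ∧ d = 0 := by
  have h1 := h 1 one_pos
  have h2 := h 2 two_pos
  have h3 := h 3 three_pos
  have h4 := h 4 four_pos
  norm_num at h1 h2 h3 h4
  refine ⟨?_, ?_, ?_, ?_⟩ <;> linarith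

lemma coeff_relations_of_forall_eq {a b c β σ : ℝ} {p q : ℝ[X]}
    (hp : p.natDegree ≤ 2) (hq : q.natDegree ≤ 1) (hlead : p.coeff 2 ^ 2 = σ / 4)
    (h : ∀ t : ℝ, β / 6 * |t| ^ 3 + σ / 4 * t ^ 4
      = a + b * t + c * t ^ 2 + p.eval |t| ^ 2 + |t| * q.eval |t| ^ 2) :
    2 * p.coeff 1 * p.coeff 0 + q.coeff 0 ^ 2 = 0
      ∧ β / 6 = 2 * p.coeff 2 * p.coeff 1 + q.coeff 1 ^ 2 := by
  simp only [eval_eq_of_natDegree_le_two hp, eval_eq_of_natDegree_le_one hq] at h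
  have hpoly (t : ℝ) (ht : 0 < t) :
      (-2 * a - 2 * p.coeff 0 ^ 2)
      + (-4 * p.coeff 1 * p.coeff 0 - 2 * q.coeff 0 ^ 2) * t
      + (-2 * c - 2 * p.coeff 1 ^ 2 - 4 * p.coeff 2 * p.coeff 0 - 4 * q.coeff 1 * q.coeff 0) * t ^ 2
      + (β / 3 - 4 * p.coeff 2 * p.coeff 1 - 2 * q.coeff 1 ^ 2) * t ^ 3 = 0 := by
    have hpos := h t
    have hneg := h (-t)
    rw [abs_neg] at hneg
    rw [abs_of_pos ht] at hpos hneg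
    linear_combination hpos + hneg + 2 * t ^ 4 * hlead
  obtain ⟨-, h1, -, h3⟩ := cubic_coeffs_eq_zero hpoly
  constructor <;> linarith

lemma eq_zero_of_add_sq_add_mul_sq_eq_zero {x a b r : ℝ} (hx : 0 ≤ x) (hr : 0 < r)
    (h : x + a ^ 2 + r * b ^ 2 = 0) : a = 0 ∧ b = 0 := by
  have hb : r * b ^ 2 = 0 := by nlinarith [sq_nonneg a, mul_nonneg hr.le (sq_nonneg b)]
  have ha : a ^ 2 = 0 := by nlinarith [sq_nonneg a]
  exact ⟨pow_eq_zero_iff two_ne_zero |>.mp ha,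
    pow_eq_zero_iff two_ne_zero |>.mp ((mul_eq_zero.mp hb).resolve_left hr.ne')⟩

lemma mul_add_eq_sq_of_coeff_relations {r β σ A B C D E : ℝ} (hr : r ≠ 0)
    (hA : A ^ 2 = σ / 4) (h1 : 2 * B * C + E ^ 2 = 0) (h3 : β / 6 = 2 * A * B + D ^ 2)
    (hp : C + B * r + A * r ^ 2 = 0) (hq : E + D * r = 0) :
    r * (β + 3 * σ * r) = 12 * (A * r + B) ^ 2 := by
  refine mul_left_cancel₀ hr ?_
  linear_combination 6 * r ^ 2 * h3 - 12 * r ^ 3 * hA + 6 * h1 - 12 * B * hp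
    + 6 * (D * r - E) * hq

theorem stmt14_general {n : ℕ} (f0 : ℝ) (g : Fin n → ℝ) (H : Matrix (Fin n) (Fin n) ℝ)
    (β σ : ℝ) (hσ : 0 ≤ σ)
    (X : Matrix (Fin (n+1)) (Fin (n+1)) ℝ) (hX : X.PosSemidef)
    (p q : Polynomial ℝ) (hp : p.degree = 2)
    (hplead : p.coeff 2 = Real.sqrt σ / 2) (hq : q.degree ≤ 1)
    (sstar : Fin n → ℝ) (hs : sstar ≠ 0)
    (hrep : ∀ s : Fin n → ℝ,
      Mfun f0 g H β σ s - Mfun f0 g H β σ sstar =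
        (Fin.cons 1 s) ⬝ᵥ (X *ᵥ (Fin.cons 1 s))
          + (p.eval (enorm2 s))^2 + enorm2 s * (q.eval (enorm2 s))^2) :
    0 ≤ enorm2 sstar * (β + 3 * σ * enorm2 sstar) := by
  set r := enorm2 sstar
  have hr : 0 < r := enorm2_pos hs
  have hpd : p.natDegree ≤ 2 := (natDegree_eq_of_degree_eq_some hp).le
  have hqd : q.natDegree ≤ 1 := natDegree_le_of_degree_le hq
  have hA : p.coeff 2 ^ 2 = σ / 4 := by rw [hplead, div_pow, Real.sq_sqrt hσ]; norm_num
  obtain ⟨hpr, hqr⟩ : p.eval r = 0 ∧ q.eval r = 0 := by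
    have h := hrep sstar
    rw [sub_self] at h
    exact eq_zero_of_add_sq_add_mul_sq_eq_zero (hX.dotProduct_mulVec_nonneg _) hr h.symm
  set u := r⁻¹ • sstar
  have hu : enorm2 u = 1 := by rw [enorm2_smul, abs_inv, abs_of_pos hr, inv_mul_cancel₀ hr.ne']
  obtain ⟨a, b, c, hquad⟩ := exists_quadratic_cons_one_smul X u
  obtain ⟨h1, h3⟩ := coeff_relations_of_forall_eq hpd hqd hA
    (β := β) (a := a + Mfun f0 g H β σ sstar - f0) (b := b - g ⬝ᵥ u)
    (c := c - 1 / 2 * (u ⬝ᵥ (H *ᵥ u))) fun t => by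
      have h := hrep (t • u)
      rw [Mfun_smul_of_enorm2_eq_one f0 g H β σ hu, hquad, enorm2_smul, hu, mul_one] at h
      linear_combination h
  rw [eval_eq_of_natDegree_le_two hpd] at hpr
  rw [eval_eq_of_natDegree_le_one hqd] at hqr
  rw [mul_add_eq_sq_of_coeff_relations hr.ne' hA h1 h3 hpr hqr]
  positivity

theorem stmt14 {n : ℕ} (f0 : ℝ) (g : Fin n → ℝ) (H : Matrix (Fin n) (Fin n) ℝ)
    (hH : H.IsSymm) (β σ : ℝ) (hσ : 0 ≤ σ)
    (X : Matrix (Fin (n+1)) (Fin (n+1)) ℝ) (hX : X.PosSemidef)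
    (p q : Polynomial ℝ) (hp : p.degree = 2)
    (hplead : p.coeff 2 = Real.sqrt σ / 2) (hq : q.degree ≤ 1)
    (sstar : Fin n → ℝ) (hs : sstar ≠ 0)
    (hmin : ∀ s : Fin n → ℝ, Mfun f0 g H β σ sstar ≤ Mfun f0 g H β σ s)
    (hrep : ∀ s : Fin n → ℝ,
      Mfun f0 g H β σ s - Mfun f0 g H β σ sstar =
        (Fin.cons 1 s) ⬝ᵥ (X *ᵥ (Fin.cons 1 s))
          + (p.eval (enorm2 s))^2 + enorm2 s * (q.eval (enorm2 s))^2) :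
    0 ≤ enorm2 sstar * (β + 3 * σ * enorm2 sstar) :=
  stmt14_general f0 g H β σ hσ X hX p q hp hplead hq sstar hs hrep
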